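/- Let n ≥ 2, let C be an n-dimensional cone in ℝ^{n+1}, and let r : I → ℝ^{n+1}∖{0} be a non-colliding geodesic on C. Define α : I → ℝ^{n+1} by α(t) = r(t)/|r(t)|. Then for every t ∈ I at which α is twice differentiable, the vectors α̇(t) and α̈(t) are linearly independent. -/

import Mathlib

/-!
Write `r = ‖r‖ α` with `α` on the unit sphere, so that `α - a` lies in `U` and `α̇ ∈ U`.
The geodesic equations give `r̈ ⊥ r` and `r̈ ⊥ ṙ`, hence the Gram determinant
`|r|²|ṙ|² - ⟪r, ṙ⟫² = |r|⁴ |α̇|²` is constant along `r`; since `r` is non-colliding it never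
vanishes, so `α̇ ≠ 0`. Finally `α̇ ⊥ α - a` (as `α̇ ⊥ α` and `α̇ ⊥ a`), and differentiating
once more gives `⟪α̈, α - a⟫ = -|α̇|² ≠ 0`, which separates `α̈` from the line through `α̇`.
-/

open scoped InnerProductSpace

/-- `IsCone n k C U a` : `C` is the `k`-dimensional cone in `ℝⁿ` generated by the affine
plane `P = a + U`, where `U` is a `k`-dimensional linear subspace, `a ∈ U^⊥`, and `P`
meets the unit sphere in more than one point; `C = {x ≠ 0 : x/|x| ∈ P}`. -/
def IsCone (n k : ℕ) (C : Set (EuclideanSpace ℝ (Fin n)))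
    (U : Submodule ℝ (EuclideanSpace ℝ (Fin n))) (a : EuclideanSpace ℝ (Fin n)) : Prop :=
  Module.finrank ℝ U = k ∧ a ∈ Uᗮ ∧
  (∃ x y : EuclideanSpace ℝ (Fin n), x ≠ y ∧ ‖x‖ = 1 ∧ ‖y‖ = 1 ∧ x - a ∈ U ∧ y - a ∈ U) ∧
  C = {x | x ≠ 0 ∧ ‖x‖⁻¹ • x - a ∈ U}

/-- `C` is a `k`-dimensional cone of aperture `ψ` in `ℝⁿ`: `cos ψ = |a|`, `ψ ∈ (0, π/2]`. -/
def IsConeWithAperture (n k : ℕ) (C : Set (EuclideanSpace ℝ (Fin n)))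
    (U : Submodule ℝ (EuclideanSpace ℝ (Fin n))) (a : EuclideanSpace ℝ (Fin n))
    (ψ : ℝ) : Prop :=
  IsCone n k C U a ∧ ψ ∈ Set.Ioc 0 (Real.pi / 2) ∧ Real.cos ψ = ‖a‖

/-- A curve `r` (with second derivative `r''`) is a geodesic on the cone `C` generated by
`a + U` : it lies on `C` and its acceleration is orthogonal to the tangent space
`span{r(t)} ⊕ (U ∩ r(t)^⊥)` of `C` at `r(t)`, for every `t ∈ I`. -/
def IsGeodesicOn (n : ℕ) (I : Set ℝ) (r r'' : ℝ → EuclideanSpace ℝ (Fin n))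
    (C : Set (EuclideanSpace ℝ (Fin n)))
    (U : Submodule ℝ (EuclideanSpace ℝ (Fin n))) : Prop :=
  (∀ t ∈ I, r t ∈ C) ∧
  ∀ t ∈ I, ⟪r'' t, r t⟫_ℝ = 0 ∧
    ∀ w ∈ U, ⟪w, r t⟫_ℝ = 0 → ⟪r'' t, w⟫_ℝ = 0

open scoped Topology

section Calculus

variable {F : Type*} [NormedAddCommGroup F] [NormedSpace ℝ F] {f : ℝ → F} {f' : F} {t : ℝ}

theorem HasDerivAt.eq_zero_of_eventually_eq_const {c : F} (hf : HasDerivAt f f' t)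
    (h : ∀ᶠ s in 𝓝 t, f s = c) : f' = 0 :=
  hf.unique ((hasDerivAt_const t c).congr_of_eventuallyEq h)

theorem HasDerivAt.mem_of_eventually_mem {U : Submodule ℝ F} (hU : IsClosed (U : Set F))
    (hf : HasDerivAt f f' t) (h : ∀ᶠ s in 𝓝 t, f s ∈ U) : f' ∈ U := by
  refine hU.mem_of_tendsto (hasDerivAt_iff_tendsto_slope.mp hf) ?_
  filter_upwards [nhdsWithin_le_nhds h] with s hs
  rw [slope_def_module]
  exact U.smul_mem _ (U.sub_mem hs h.self_of_nhds)

end Calculus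

section InnerProductSpace

variable {E : Type*} [NormedAddCommGroup E] [InnerProductSpace ℝ E]

theorem linearIndependent_pair_of_inner_eq_zero_of_inner_ne_zero {x y v : E} (hx : x ≠ 0)
    (hxv : ⟪x, v⟫_ℝ = 0) (hyv : ⟪y, v⟫_ℝ ≠ 0) : LinearIndependent ℝ ![x, y] := by
  refine (LinearIndependent.pair_iff' hx).mpr fun c hc => hyv ?_
  rw [← hc, real_inner_smul_left, hxv, mul_zero]

theorem HasDerivAt.inner_eq_zero_of_eventually_norm_eq {f : ℝ → E} {f' : E} {t c : ℝ}
    (hf : HasDerivAt f f' t) (h : ∀ᶠ s in 𝓝 t, ‖f s‖ = c) : ⟪f', f t⟫_ℝ = 0 := by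
  have h0 := (hf.inner ℝ hf).eq_zero_of_eventually_eq_const (c := c ^ 2)
    (h.mono fun s hs => by rw [real_inner_self_eq_norm_sq, hs])
  rw [real_inner_comm] at h0
  linarith

theorem norm_smul_inv_norm_smul (x : E) : ‖x‖ • (‖x‖⁻¹ • x) = x := by
  rcases eq_or_ne x 0 with rfl | hx
  · simp
  · rw [smul_smul, mul_inv_cancel₀ (norm_ne_zero_iff.mpr hx), one_smul]

/-- For a curve `r`, `gramDet r ṙ` is the squared norm of the angular momentum `r ∧ ṙ`. -/
def gramDet (x y : E) : ℝ := ⟪x, x⟫_ℝ * ⟪y, y⟫_ℝ - ⟪x, y⟫_ℝ ^ 2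

theorem gramDet_smul_smul_add_smul {u v : E} (hu : ‖u‖ = 1) (hvu : ⟪v, u⟫_ℝ = 0) (ρ d : ℝ) :
    gramDet (ρ • u) (d • u + ρ • v) = ρ ^ 4 * ‖v‖ ^ 2 := by
  have huv : ⟪u, v⟫_ℝ = 0 := by rw [real_inner_comm, hvu]
  have huu : ⟪u, u⟫_ℝ = 1 := by rw [real_inner_self_eq_norm_sq, hu, one_pow]
  simp only [gramDet, inner_add_left, inner_add_right, real_inner_smul_left,
    real_inner_smul_right, huu, huv, hvu, real_inner_self_eq_norm_sq v]
  ring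

theorem HasDerivAt.gramDet_of_inner_eq_zero {r r' : ℝ → E} {r'' : E} {t : ℝ}
    (hr : HasDerivAt r (r' t) t) (hr' : HasDerivAt r' r'' t)
    (h₁ : ⟪r'', r t⟫_ℝ = 0) (h₂ : ⟪r'', r' t⟫_ℝ = 0) :
    HasDerivAt (fun s => gramDet (r s) (r' s)) 0 t := by
  have hrr := hr.inner ℝ hr
  have hr'r' := hr'.inner ℝ hr'
  have hrr' := hr.inner ℝ hr'
  refine ((hrr.mul hr'r').sub (hrr'.pow 2)).congr_deriv ?_
  rw [real_inner_comm r'', real_inner_comm r'' (r t)] at *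
  rw [h₁, h₂, real_inner_comm (r' t) (r t)]
  ring

def IsColliding (I : Set ℝ) (r r' : ℝ → E) : Prop := ∀ t ∈ I, ∃ c : ℝ, r' t = c • r t

section Normalize

variable {I : Set ℝ} {r α : ℝ → E}

theorem exists_eq_smul_add_norm_smul_of_hasDerivAt {r' α' : E} {t : ℝ}
    (hα : ∀ s, α s = ‖r s‖⁻¹ • r s) (hr : HasDerivAt r r' t) (hα' : HasDerivAt α α' t)
    (h0 : r t ≠ 0) : ∃ d : ℝ, r' = d • α t + ‖r t‖ • α' := by
  have hρ := (hr.differentiableAt.norm ℝ h0).hasDerivAt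
  have hprod := (hρ.smul hα').congr_of_eventuallyEq <|
    Filter.Eventually.of_forall fun s => by
      change r s = ‖r s‖ • α s
      rw [hα, norm_smul_inv_norm_smul]
  exact ⟨_, (hr.unique hprod).trans (add_comm _ _)⟩

theorem inner_deriv_normalize_eq_zero (hI : IsOpen I) (hα : ∀ s, α s = ‖r s‖⁻¹ • r s)
    (hne : ∀ s ∈ I, r s ≠ 0) {α' : E} {t : ℝ} (ht : t ∈ I) (hα' : HasDerivAt α α' t) :
    ⟪α', α t⟫_ℝ = 0 :=
  hα'.inner_eq_zero_of_eventually_norm_eq (c := 1) <|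
    Filter.eventually_of_mem (hI.mem_nhds ht) fun s hs => by
      rw [hα]
      exact norm_smul_inv_norm (hne s hs)

theorem gramDet_eq_norm_pow_mul_norm_deriv_normalize_sq {r' α' : ℝ → E} (hI : IsOpen I)
    (hα : ∀ s, α s = ‖r s‖⁻¹ • r s) (hne : ∀ s ∈ I, r s ≠ 0) {t : ℝ} (ht : t ∈ I)
    (hr : HasDerivAt r (r' t) t) (hα' : HasDerivAt α (α' t) t) :
    gramDet (r t) (r' t) = ‖r t‖ ^ 4 * ‖α' t‖ ^ 2 := by
  obtain ⟨d, hd⟩ := exists_eq_smul_add_norm_smul_of_hasDerivAt hα hr hα' (hne t ht)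
  have hrα : r t = ‖r t‖ • α t := by rw [hα, norm_smul_inv_norm_smul]
  have hunit : ‖α t‖ = 1 := by
    rw [hα]
    exact norm_smul_inv_norm (hne t ht)
  rw [hd]
  generalize ‖r t‖ = ρ at hrα ⊢
  rw [hrα, gramDet_smul_smul_add_smul hunit (inner_deriv_normalize_eq_zero hI hα hne ht hα')]

/-- The Gram determinant `‖r‖⁴ ‖α̇‖²` is conserved, so it vanishes identically once it vanishes
at one instant. -/
theorem deriv_normalize_ne_zero_of_not_isColliding {r' r'' α' : ℝ → E} (hI : IsOpen I)
    (hIc : I.OrdConnected) (hα : ∀ s, α s = ‖r s‖⁻¹ • r s) (hne : ∀ s ∈ I, r s ≠ 0)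
    (hr : ∀ s ∈ I, HasDerivAt r (r' s) s) (hr' : ∀ s ∈ I, HasDerivAt r' (r'' s) s)
    (hα' : ∀ s ∈ I, HasDerivAt α (α' s) s)
    (h₁ : ∀ s ∈ I, ⟪r'' s, r s⟫_ℝ = 0) (h₂ : ∀ s ∈ I, ⟪r'' s, r' s⟫_ℝ = 0)
    (hnc : ¬ IsColliding I r r') {t : ℝ} (ht : t ∈ I) : α' t ≠ 0 := by
  intro h0
  refine hnc fun s hs => ?_
  have hgram (u) (hu : u ∈ I) := gramDet_eq_norm_pow_mul_norm_deriv_normalize_sq hI hα hne hu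
    (hr u hu) (hα' u hu)
  have hderiv (u) (hu : u ∈ I) := (hr u hu).gramDet_of_inner_eq_zero (hr' u hu) (h₁ u hu) (h₂ u hu)
  have hconst : gramDet (r s) (r' s) = gramDet (r t) (r' t) :=
    hI.is_const_of_deriv_eq_zero hIc.isPreconnected
      (fun u hu => (hderiv u hu).differentiableAt.differentiableWithinAt)
      (fun u hu => (hderiv u hu).deriv) hs ht
  have hα's : α' s = 0 := by
    rw [hgram s hs, hgram t ht, h0, norm_zero] at hconst
    have hρ : ‖r s‖ ^ 4 ≠ 0 := pow_ne_zero _ (norm_ne_zero_iff.mpr (hne s hs))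
    simpa [hρ] using hconst
  obtain ⟨d, hd⟩ := exists_eq_smul_add_norm_smul_of_hasDerivAt hα (hr s hs) (hα' s hs) (hne s hs)
  exact ⟨d * ‖r s‖⁻¹, by rw [hd, hα's, smul_zero, add_zero, hα, smul_smul]⟩

end Normalize

end InnerProductSpace

section Cone

variable {m k : ℕ} {C : Set (EuclideanSpace ℝ (Fin m))}
  {U : Submodule ℝ (EuclideanSpace ℝ (Fin m))} {a : EuclideanSpace ℝ (Fin m)}
  {I : Set ℝ} {r r' r'' α α' : ℝ → EuclideanSpace ℝ (Fin m)} {t : ℝ}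

theorem IsCone.ne_zero (hC : IsCone m k C U a) {x : EuclideanSpace ℝ (Fin m)} (hx : x ∈ C) :
    x ≠ 0 := by
  obtain ⟨-, -, -, rfl⟩ := hC
  exact hx.1

theorem IsCone.inv_norm_smul_sub_mem (hC : IsCone m k C U a) {x : EuclideanSpace ℝ (Fin m)}
    (hx : x ∈ C) : ‖x‖⁻¹ • x - a ∈ U := by
  obtain ⟨-, -, -, rfl⟩ := hC
  exact hx.2

theorem IsCone.deriv_normalize_mem (hC : IsCone m k C U a) (hI : IsOpen I)
    (hrC : ∀ s ∈ I, r s ∈ C) (hα : ∀ s, α s = ‖r s‖⁻¹ • r s)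
    (hα' : ∀ s ∈ I, HasDerivAt α (α' s) s) (ht : t ∈ I) : α' t ∈ U :=
  ((hα' t ht).sub_const a).mem_of_eventually_mem U.closed_of_finiteDimensional <|
    Filter.eventually_of_mem (hI.mem_nhds ht) fun s hs => by
      rw [hα]
      exact hC.inv_norm_smul_sub_mem (hrC s hs)

theorem IsCone.inner_deriv_normalize_sub_eq_zero (hC : IsCone m k C U a) (hI : IsOpen I)
    (hrC : ∀ s ∈ I, r s ∈ C) (hα : ∀ s, α s = ‖r s‖⁻¹ • r s)
    (hα' : ∀ s ∈ I, HasDerivAt α (α' s) s) (ht : t ∈ I) : ⟪α' t, α t - a⟫_ℝ = 0 := by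
  have hα'a : ⟪α' t, a⟫_ℝ = 0 :=
    U.inner_right_of_mem_orthogonal (hC.deriv_normalize_mem hI hrC hα hα' ht) hC.2.1
  rw [inner_sub_right, hα'a,
    inner_deriv_normalize_eq_zero hI hα (fun s hs => hC.ne_zero (hrC s hs)) ht (hα' t ht),
    sub_zero]

theorem IsGeodesicOn.inner_snd_deriv_deriv_eq_zero (hgeo : IsGeodesicOn m I r r'' C U)
    (hC : IsCone m k C U a) (hI : IsOpen I) (hα : ∀ s, α s = ‖r s‖⁻¹ • r s)
    (hr : ∀ s ∈ I, HasDerivAt r (r' s) s) (hα' : ∀ s ∈ I, HasDerivAt α (α' s) s)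
    (ht : t ∈ I) : ⟪r'' t, r' t⟫_ℝ = 0 := by
  have hne : ∀ s ∈ I, r s ≠ 0 := fun s hs => hC.ne_zero (hgeo.1 s hs)
  obtain ⟨d, hd⟩ := exists_eq_smul_add_norm_smul_of_hasDerivAt hα (hr t ht) (hα' t ht) (hne t ht)
  have hα'r : ⟪α' t, r t⟫_ℝ = 0 := by
    rw [← norm_smul_inv_norm_smul (r t), ← hα, real_inner_smul_right,
      inner_deriv_normalize_eq_zero hI hα hne ht (hα' t ht), mul_zero]
  have hr''α' : ⟪r'' t, α' t⟫_ℝ = 0 :=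
    (hgeo.2 t ht).2 _ (hC.deriv_normalize_mem hI hgeo.1 hα hα' ht) hα'r
  have hr''α : ⟪r'' t, α t⟫_ℝ = 0 := by
    rw [hα, real_inner_smul_right, (hgeo.2 t ht).1, mul_zero]
  rw [hd, inner_add_right, real_inner_smul_right, real_inner_smul_right, hr''α, hr''α']
  ring

end Cone

theorem alpha_first_two_derivatives_independent_general
    (n : ℕ)
    (I : Set ℝ) (hIopen : IsOpen I) (hIconn : I.OrdConnected)
    (r r' r'' : ℝ → EuclideanSpace ℝ (Fin (n + 1)))
    (hne : ∀ t ∈ I, r t ≠ 0)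
    (hd1 : ∀ t ∈ I, HasDerivAt r (r' t) t)
    (hd2 : ∀ t ∈ I, HasDerivAt r' (r'' t) t)
    (hnoncoll : ¬ (∀ t ∈ I, ∃ c : ℝ, r' t = c • r t))
    (C : Set (EuclideanSpace ℝ (Fin (n + 1))))
    (U : Submodule ℝ (EuclideanSpace ℝ (Fin (n + 1))))
    (a : EuclideanSpace ℝ (Fin (n + 1)))
    (hC : IsCone (n + 1) n C U a)
    (hgeo : IsGeodesicOn (n + 1) I r r'' C U)
    (α : ℝ → EuclideanSpace ℝ (Fin (n + 1)))
    (hα : ∀ t, α t = ‖r t‖⁻¹ • r t) :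
    ∀ t ∈ I, ∀ (α' : ℝ → EuclideanSpace ℝ (Fin (n + 1)))
      (a'' : EuclideanSpace ℝ (Fin (n + 1))),
      (∀ s ∈ I, HasDerivAt α (α' s) s) → HasDerivAt α' a'' t →
      LinearIndependent ℝ ![α' t, a''] := by
  intro t ht α' a'' hα' ha''
  have hperp (s) (hs : s ∈ I) := hC.inner_deriv_normalize_sub_eq_zero hIopen hgeo.1 hα hα' hs
  have hα't : α' t ≠ 0 :=
    deriv_normalize_ne_zero_of_not_isColliding hIopen hIconn hα hne hd1 hd2 hα'
      (fun s hs => (hgeo.2 s hs).1)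
      (fun s hs => hgeo.inner_snd_deriv_deriv_eq_zero hC hIopen hα hd1 hα' hs) hnoncoll ht
  have hsec : ⟪α' t, α' t⟫_ℝ + ⟪a'', α t - a⟫_ℝ = 0 :=
    (ha''.inner ℝ ((hα' t ht).sub_const a)).eq_zero_of_eventually_eq_const
      (Filter.eventually_of_mem (hIopen.mem_nhds ht) hperp)
  refine linearIndependent_pair_of_inner_eq_zero_of_inner_ne_zero hα't (hperp t ht) ?_
  rw [real_inner_self_eq_norm_sq] at hsec
  have hpos : 0 < ‖α' t‖ ^ 2 := by positivity
  linarith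

/-- Let `C` be an `n`-dimensional cone in `ℝ^{n+1}` (`n ≥ 2`) and let
`r` be a non-colliding geodesic on `C`. Let `α(t) = r(t)/|r(t)|`. Then at every `t ∈ I`
at which `α` is twice differentiable (witnessed by a derivative function `α'` of `α` on
`I` and a second derivative `a''` at `t`), the vectors `α̇(t)` and `α̈(t)` are linearly
independent. -/
theorem alpha_first_two_derivatives_independent
    (n : ℕ) (hn : 2 ≤ n)
    (I : Set ℝ) (hIopen : IsOpen I) (hIconn : I.OrdConnected)
    (r r' r'' : ℝ → EuclideanSpace ℝ (Fin (n + 1)))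
    (hne : ∀ t ∈ I, r t ≠ 0)
    (hd1 : ∀ t ∈ I, HasDerivAt r (r' t) t)
    (hd2 : ∀ t ∈ I, HasDerivAt r' (r'' t) t)
    (hC2 : ContinuousOn r'' I)
    (hnoncoll : ¬ (∀ t ∈ I, ∃ c : ℝ, r' t = c • r t))
    (C : Set (EuclideanSpace ℝ (Fin (n + 1))))
    (U : Submodule ℝ (EuclideanSpace ℝ (Fin (n + 1))))
    (a : EuclideanSpace ℝ (Fin (n + 1)))
    (hC : IsCone (n + 1) n C U a)
    (hgeo : IsGeodesicOn (n + 1) I r r'' C U)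
    (α : ℝ → EuclideanSpace ℝ (Fin (n + 1)))
    (hα : ∀ t, α t = ‖r t‖⁻¹ • r t) :
    ∀ t ∈ I, ∀ (α' : ℝ → EuclideanSpace ℝ (Fin (n + 1)))
      (a'' : EuclideanSpace ℝ (Fin (n + 1))),
      (∀ s ∈ I, HasDerivAt α (α' s) s) → HasDerivAt α' a'' t →
      LinearIndependent ℝ ![α' t, a''] :=
  alpha_first_two_derivatives_independent_general n I hIopen hIconn r r' r'' hne hd1 hd2 hnoncoll C
    U a hC hgeo α hα
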